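/- Let x_1, …, x_n and y_1, …, y_m be real numbers, S_F = diag(e^{i x_1}, …, e^{i x_n}) ∈ ℂ^{n×n}, S_f = diag(e^{i y_1}, …, e^{i y_m}) ∈ ℂ^{m×m}, and let K ∈ ℂ^{m×m} and R ∈ ℂ^{n×n} be the diagonal matrices with K_{jj} = (1 − e^{−i y_j})/|1 − e^{−i y_j}| if e^{−i y_j} ≠ 1, K_{jj} = i otherwise, and R_{kk} = (1 − e^{−i x_k})/|1 − e^{−i x_k}| if e^{−i x_k} ≠ 1, R_{kk} = i otherwise. Let M ∈ ℝ^{n×m} be a real matrix, A = S_F M − M S_f ∈ ℂ^{n×m}, and Â = −i R A K, which is a real matrix. Suppose Â V̂ = Û S where V̂ ∈ ℝ^{m×m} satisfies V̂ᵀV̂ = I, Û ∈ ℝ^{n×m} satisfies ÛᵀÛ = I, and S ∈ ℝ^{m×m} is diagonal with nonnegative entries. Then the matrices U = −conj(R) Û ∈ ℂ^{n×m} and V = i K V̂ ∈ ℂ^{m×m} satisfy A V = U S, Vᴴ V = I, and Uᴴ U = I; that is, V and U are orthonormal bases of right and left singular vectors of A. -/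

import Mathlib

/-!
`R` and `K` are diagonal with unimodular entries, hence unitary, and `conj R = Rᴴ`.
Multiplying `R A K = i Â` by `Rᴴ` gives `A K = i Rᴴ Â`, so `A (i K V̂) = -Rᴴ Â V̂ = -Rᴴ Û S`.
Left multiplication by a unitary matrix or a unimodular scalar preserves orthonormality of
columns, which gives `Vᴴ V = 1` and `Uᴴ U = 1`.
-/

open Matrix

noncomputable def oneSubPhase (z : ℂ) : ℂ :=
  if z ≠ 1 then (1 - z) / ((‖1 - z‖ : ℝ) : ℂ) else Complex.I

lemma norm_oneSubPhase (z : ℂ) : ‖oneSubPhase z‖ = 1 := by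
  unfold oneSubPhase
  split_ifs with h
  · have : ‖1 - z‖ ≠ 0 := norm_ne_zero_iff.mpr (sub_ne_zero.mpr (Ne.symm h))
    rw [norm_div, Complex.norm_real, norm_norm, div_self this]
  · simp

lemma Complex.mem_unitary_of_norm_eq_one {w : ℂ} (hw : ‖w‖ = 1) : w ∈ unitary ℂ := by
  rw [Unitary.mem_iff_star_mul_self, Complex.star_def, Complex.conj_mul', hw]
  norm_num

lemma oneSubPhase_mem_unitary (z : ℂ) : oneSubPhase z ∈ unitary ℂ :=
  Complex.mem_unitary_of_norm_eq_one (norm_oneSubPhase z)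

lemma Matrix.diagonal_mem_unitaryGroup {n α : Type*} [Fintype n] [DecidableEq n] [CommRing α]
    [StarRing α] {d : n → α} (hd : ∀ i, d i ∈ unitary α) : diagonal d ∈ unitaryGroup n α := by
  simp only [Unitary.mem_iff, star_eq_conjTranspose, diagonal_conjTranspose, diagonal_mul_diagonal]
  constructor <;> rw [← diagonal_one] <;> congr 1 <;> funext i
  · exact Unitary.star_mul_self_of_mem (hd i)
  · exact Unitary.mul_star_self_of_mem (hd i)

lemma Matrix.map_ofReal_mul {l m n : Type*} [Fintype m] (X : Matrix l m ℝ) (Y : Matrix m n ℝ) :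
    (X * Y).map (fun a => (a : ℂ)) = X.map (fun a => (a : ℂ)) * Y.map (fun a => (a : ℂ)) :=
  Matrix.map_mul (f := Complex.ofRealHom)

lemma Matrix.conjTranspose_map_ofReal {m n : Type*} (X : Matrix m n ℝ) :
    (X.map (fun a => (a : ℂ)))ᴴ = Xᵀ.map (fun a => (a : ℂ)) := by
  rw [← conjTranspose_map _ fun a => (Complex.conj_ofReal a).symm,
    conjTranspose_eq_transpose_of_trivial]

lemma Matrix.conjTranspose_map_ofReal_mul_self_eq_one {m n : Type*} [Fintype m] [DecidableEq n]
    {X : Matrix m n ℝ} (hX : Xᵀ * X = 1) :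
    (X.map (fun a => (a : ℂ)))ᴴ * X.map (fun a => (a : ℂ)) = 1 := by
  rw [conjTranspose_map_ofReal, ← map_ofReal_mul, hX]
  exact Matrix.map_one _ Complex.ofReal_zero Complex.ofReal_one

lemma Matrix.conjTranspose_mul_mul_self_eq_one {l m p α : Type*} [Fintype m] [Fintype l]
    [DecidableEq l] [DecidableEq p] [Semiring α] [StarRing α] {K : Matrix m l α} {W : Matrix l p α}
    (hK : Kᴴ * K = 1) (hW : Wᴴ * W = 1) : (K * W)ᴴ * (K * W) = 1 := by
  rw [conjTranspose_mul, Matrix.mul_assoc, ← Matrix.mul_assoc Kᴴ, hK, Matrix.one_mul, hW]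

theorem mul_I_smul_mul_eq_neg_conjTranspose_mul_mul {l m n p : Type*} [Fintype l] [Fintype m]
    [Fintype n] [Fintype p] [DecidableEq n] {R : Matrix n n ℂ} {K : Matrix m l ℂ}
    {A : Matrix n m ℂ} {B : Matrix n l ℂ} {U₀ : Matrix n p ℂ} {V₀ : Matrix l p ℂ}
    {S : Matrix p p ℂ} (hR : R ∈ unitaryGroup n ℂ) (hB : R * A * K = Complex.I • B)
    (hsvd : B * V₀ = U₀ * S) :
    A * (Complex.I • (K * V₀)) = -(Rᴴ * U₀) * S := by
  have hAK : A * K = Complex.I • (Rᴴ * B) := by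
    rw [← Matrix.mul_smul, ← hB, ← Matrix.mul_assoc, ← Matrix.mul_assoc, ← star_eq_conjTranspose,
      Unitary.star_mul_self_of_mem hR, Matrix.one_mul]
  rw [Matrix.mul_smul, ← Matrix.mul_assoc, hAK, Matrix.smul_mul, smul_smul, Complex.I_mul_I,
    neg_one_smul, Matrix.mul_assoc, hsvd, ← Matrix.mul_assoc, Matrix.neg_mul]

theorem conjTranspose_mul_self_I_smul_mul {l m p : Type*} [Fintype l] [Fintype m]
    [DecidableEq l] [DecidableEq p] {K : Matrix m l ℂ} {V₀ : Matrix l p ℂ}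
    (hK : Kᴴ * K = 1) (hV : V₀ᴴ * V₀ = 1) :
    (Complex.I • (K * V₀))ᴴ * (Complex.I • (K * V₀)) = 1 := by
  rw [conjTranspose_smul, Matrix.smul_mul, Matrix.mul_smul, smul_smul, Complex.star_def,
    Complex.conj_I, neg_mul, Complex.I_mul_I, neg_neg, one_smul,
    conjTranspose_mul_mul_self_eq_one hK hV]

theorem conjTranspose_mul_self_neg_conjTranspose_mul {n p : Type*} [Fintype n] [DecidableEq n]
    [DecidableEq p] {R : Matrix n n ℂ} {U₀ : Matrix n p ℂ} (hR : R ∈ unitaryGroup n ℂ)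
    (hU : U₀ᴴ * U₀ = 1) : (-(Rᴴ * U₀))ᴴ * -(Rᴴ * U₀) = 1 := by
  have hRR : Rᴴᴴ * Rᴴ = 1 := by
    rw [conjTranspose_conjTranspose, ← star_eq_conjTranspose, Unitary.mul_star_self_of_mem hR]
  rw [conjTranspose_neg, Matrix.neg_mul, Matrix.mul_neg, neg_neg,
    conjTranspose_mul_mul_self_eq_one hRR hU]

theorem stmt_7 (m n : ℕ)
    (x : Fin n → ℝ) (y : Fin m → ℝ)
    (K : Matrix (Fin m) (Fin m) ℂ)
    (hK : K = Matrix.diagonal fun j =>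
      if Complex.exp (-(Complex.I * (y j : ℝ))) ≠ 1 then
        (1 - Complex.exp (-(Complex.I * (y j : ℝ))))
          / ((‖1 - Complex.exp (-(Complex.I * (y j : ℝ)))‖ : ℝ) : ℂ)
      else Complex.I)
    (R : Matrix (Fin n) (Fin n) ℂ)
    (hR : R = Matrix.diagonal fun k =>
      if Complex.exp (-(Complex.I * (x k : ℝ))) ≠ 1 then
        (1 - Complex.exp (-(Complex.I * (x k : ℝ))))
          / ((‖1 - Complex.exp (-(Complex.I * (x k : ℝ)))‖ : ℝ) : ℂ)
      else Complex.I)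
    (A : Matrix (Fin n) (Fin m) ℂ)
    -- Â = -i R A K is a real matrix:
    (Ahat : Matrix (Fin n) (Fin m) ℝ)
    (hAhat : Ahat.map (fun a => (a : ℂ)) = (-Complex.I) • (R * A * K))
    -- real singular value decomposition of Â:
    (Vhat : Matrix (Fin m) (Fin m) ℝ) (Uhat : Matrix (Fin n) (Fin m) ℝ)
    (S : Matrix (Fin m) (Fin m) ℝ)
    (hsvd : Ahat * Vhat = Uhat * S)
    (hV : Vhatᵀ * Vhat = 1) (hU : Uhatᵀ * Uhat = 1)
    (U : Matrix (Fin n) (Fin m) ℂ)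
    (hUdef : U = -((R.map (starRingEnd ℂ)) * Uhat.map (fun a => (a : ℂ))))
    (V : Matrix (Fin m) (Fin m) ℂ)
    (hVdef : V = Complex.I • (K * Vhat.map (fun a => (a : ℂ)))) :
    A * V = U * S.map (fun a => (a : ℂ)) ∧ Vᴴ * V = 1 ∧ Uᴴ * U = 1 := by
  have hRu : R ∈ unitaryGroup (Fin n) ℂ := by
    rw [hR]
    exact diagonal_mem_unitaryGroup fun k => oneSubPhase_mem_unitary _
  have hKu : Kᴴ * K = 1 := by
    rw [← star_eq_conjTranspose, ← mem_unitaryGroup_iff', hK]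
    exact diagonal_mem_unitaryGroup fun j => oneSubPhase_mem_unitary _
  have hRconj : R.map (starRingEnd ℂ) = Rᴴ := by
    rw [hR, diagonal_map (map_zero _), diagonal_conjTranspose]
    rfl
  have hRAK : R * A * K = Complex.I • Ahat.map (fun a => (a : ℂ)) := by
    rw [hAhat, smul_smul, mul_neg, Complex.I_mul_I, neg_neg, one_smul]
  subst hUdef hVdef
  rw [hRconj]
  exact ⟨mul_I_smul_mul_eq_neg_conjTranspose_mul_mul hRu hRAK
      (by rw [← map_ofReal_mul, hsvd, map_ofReal_mul]),
    conjTranspose_mul_self_I_smul_mul hKu (conjTranspose_map_ofReal_mul_self_eq_one hV),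
    conjTranspose_mul_self_neg_conjTranspose_mul hRu (conjTranspose_map_ofReal_mul_self_eq_one hU)⟩
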